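/- Let A_X ∈ ℝ^{n_X×n_X}, A_Z ∈ ℝ^{n_Z×n_Z}, A_Y ∈ ℝ^{n_Y×n_Y} be arbitrary real matrices, and let W₁ ∈ ℝ^{n_X×n_Z} and W₂ ∈ ℝ^{n_Z×n_Y} be entrywise nonnegative matrices such that every column of W₁ sums to at most 1 and every row of W₂ sums to at most 1. Define the symmetrized edge cost ẽ(A, B, W) = ‖A W − W B‖ + ‖B Wᵀ − Wᵀ A‖. Then ẽ(A_X, A_Y, W₁W₂) ≤ ẽ(A_X, A_Z, W₁) + ẽ(A_Z, A_Y, W₂), where ‖M‖ = Σ_{i,j}|M(i,j)| is the componentwise 1-norm. -/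
import Mathlib


open scoped BigOperators Matrix

namespace GraphGOSPA

/-- Componentwise 1-norm of a matrix. -/
def onorm {m n : ℕ} (M : Matrix (Fin m) (Fin n) ℝ) : ℝ :=
  ∑ i, ∑ j, |M i j|

/-- The symmetrized edge cost `ẽ(A, B, W) = ‖A W − W B‖ + ‖B Wᵀ − Wᵀ A‖`
used for directed graphs. -/
def symmEdgeCost {m n : ℕ} (A : Matrix (Fin m) (Fin m) ℝ)
    (B : Matrix (Fin n) (Fin n) ℝ) (W : Matrix (Fin m) (Fin n) ℝ) : ℝ :=
  onorm (A * W - W * B) + onorm (B * Wᵀ - Wᵀ * A)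

lemma onorm_add_le {m n : ℕ} (A B : Matrix (Fin m) (Fin n) ℝ) :
    onorm (A + B) ≤ onorm A + onorm B := by
  unfold onorm
  rw [← Finset.sum_add_distrib]
  refine Finset.sum_le_sum fun i _ => ?_
  rw [← Finset.sum_add_distrib]
  exact Finset.sum_le_sum fun j _ => abs_add_le _ _

lemma onorm_mul_right_le {m n p : ℕ} (M : Matrix (Fin m) (Fin n) ℝ)
    (W : Matrix (Fin n) (Fin p) ℝ) (hW : ∀ i j, 0 ≤ W i j)
    (hrow : ∀ i, ∑ j, W i j ≤ 1) : onorm (M * W) ≤ onorm M := by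
  unfold onorm
  refine Finset.sum_le_sum fun i _ => ?_
  calc ∑ j, |(M * W) i j| ≤ ∑ j, ∑ l, |M i l| * W l j := by
        refine Finset.sum_le_sum fun j _ => ?_
        rw [Matrix.mul_apply]
        refine (Finset.abs_sum_le_sum_abs _ _).trans ?_
        refine Finset.sum_le_sum fun l _ => ?_
        rw [abs_mul, abs_of_nonneg (hW l j)]
    _ = ∑ l, |M i l| * ∑ j, W l j := by
        rw [Finset.sum_comm]; simp [Finset.mul_sum]
    _ ≤ ∑ l, |M i l| * 1 :=
        Finset.sum_le_sum fun l _ =>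
          mul_le_mul_of_nonneg_left (hrow l) (abs_nonneg _)
    _ = ∑ l, |M i l| := by simp

lemma onorm_mul_left_le {m n p : ℕ} (W : Matrix (Fin m) (Fin n) ℝ)
    (M : Matrix (Fin n) (Fin p) ℝ) (hW : ∀ i j, 0 ≤ W i j)
    (hcol : ∀ j, ∑ i, W i j ≤ 1) : onorm (W * M) ≤ onorm M := by
  unfold onorm
  calc ∑ i, ∑ j, |(W * M) i j| ≤ ∑ i, ∑ j, ∑ l, W i l * |M l j| := by
        refine Finset.sum_le_sum fun i _ => Finset.sum_le_sum fun j _ => ?_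
        rw [Matrix.mul_apply]
        refine (Finset.abs_sum_le_sum_abs _ _).trans ?_
        refine Finset.sum_le_sum fun l _ => ?_
        rw [abs_mul, abs_of_nonneg (hW i l)]
    _ = ∑ l, (∑ i, W i l) * ∑ j, |M l j| := by
        have h : (∑ i, ∑ j, ∑ l, W i l * |M l j|)
            = ∑ i, ∑ l, ∑ j, W i l * |M l j| :=
          Finset.sum_congr rfl fun i _ => Finset.sum_comm
        rw [h, Finset.sum_comm]
        simp only [Finset.sum_mul, Finset.mul_sum]
        exact Finset.sum_congr rfl fun l _ => Finset.sum_comm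
    _ ≤ ∑ l, 1 * ∑ j, |M l j| :=
        Finset.sum_le_sum fun l _ =>
          mul_le_mul_of_nonneg_right (hcol l)
            (Finset.sum_nonneg fun j _ => abs_nonneg _)
    _ = ∑ l, ∑ j, |M l j| := by simp

/-- Let `A_X`, `A_Z`, `A_Y` be arbitrary square real matrices and
`W₁`, `W₂` entrywise nonnegative matrices such that every column of `W₁` sums to at
most 1 and every row of `W₂` sums to at most 1. Then the symmetrized edge cost
satisfies `ẽ(A_X, A_Y, W₁W₂) ≤ ẽ(A_X, A_Z, W₁) + ẽ(A_Z, A_Y, W₂)`. -/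
theorem symm_edge_cost_triangle {nX nZ nY : ℕ}
    (AX : Matrix (Fin nX) (Fin nX) ℝ) (AZ : Matrix (Fin nZ) (Fin nZ) ℝ)
    (AY : Matrix (Fin nY) (Fin nY) ℝ)
    (W₁ : Matrix (Fin nX) (Fin nZ) ℝ) (W₂ : Matrix (Fin nZ) (Fin nY) ℝ)
    (hW₁ : ∀ i l, 0 ≤ W₁ i l) (hW₂ : ∀ l j, 0 ≤ W₂ l j)
    (hW₁col : ∀ l, ∑ i, W₁ i l ≤ 1) (hW₂row : ∀ l, ∑ j, W₂ l j ≤ 1) :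
    symmEdgeCost AX AY (W₁ * W₂) ≤
      symmEdgeCost AX AZ W₁ + symmEdgeCost AZ AY W₂ := by
  have hW₁t : ∀ i j, 0 ≤ W₁ᵀ i j := fun i j => hW₁ j i
  have hW₂t : ∀ i j, 0 ≤ W₂ᵀ i j := fun i j => hW₂ j i
  have hd1 : AX * (W₁ * W₂) - (W₁ * W₂) * AY
      = (AX * W₁ - W₁ * AZ) * W₂ + W₁ * (AZ * W₂ - W₂ * AY) := by
    simp only [Matrix.sub_mul, Matrix.mul_sub, Matrix.mul_assoc]
    abel
  have hd2 : AY * (W₁ * W₂)ᵀ - (W₁ * W₂)ᵀ * AX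
      = (AY * W₂ᵀ - W₂ᵀ * AZ) * W₁ᵀ + W₂ᵀ * (AZ * W₁ᵀ - W₁ᵀ * AX) := by
    rw [Matrix.transpose_mul]
    simp only [Matrix.sub_mul, Matrix.mul_sub, Matrix.mul_assoc]
    abel
  have h1 : onorm (AX * (W₁ * W₂) - (W₁ * W₂) * AY)
      ≤ onorm (AX * W₁ - W₁ * AZ) + onorm (AZ * W₂ - W₂ * AY) := by
    rw [hd1]
    refine (onorm_add_le _ _).trans (add_le_add ?_ ?_)
    · exact onorm_mul_right_le _ _ hW₂ hW₂row
    · exact onorm_mul_left_le _ _ hW₁ hW₁col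
  have h2 : onorm (AY * (W₁ * W₂)ᵀ - (W₁ * W₂)ᵀ * AX)
      ≤ onorm (AY * W₂ᵀ - W₂ᵀ * AZ) + onorm (AZ * W₁ᵀ - W₁ᵀ * AX) := by
    rw [hd2]
    refine (onorm_add_le _ _).trans (add_le_add ?_ ?_)
    · exact onorm_mul_right_le _ _ hW₁t (fun i => hW₁col i)
    · exact onorm_mul_left_le _ _ hW₂t (fun j => hW₂row j)
  unfold symmEdgeCost
  linarith

end GraphGOSPA
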